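/- Let m ≥ 2 and suppose 𝔼[X] = 𝔼[Y] = 𝔼[Z] = 𝔼[W] = 0. Then the reduced estimator c₄⁽ᵈ⁾ = [ (m+2)·\overline{XYZW} − m·(\overline{XY}·\overline{ZW} + \overline{XZ}·\overline{YW} + \overline{XW}·\overline{YZ}) ] / (m−1) satisfies 𝔼[c₄⁽ᵈ⁾] = 𝔼[XYZW] − 𝔼[XY]𝔼[ZW] − 𝔼[XZ]𝔼[YW] − 𝔼[XW]𝔼[YZ], which under the hypotheses equals the fourth multivariate cumulant C₄(x,y,z,w). -/

import Mathlib

/-!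
For i.i.d. vectors `Vᵢ`, expanding a product of two sums gives
`𝔼[(∑ᵢ g(Vᵢ)) (∑ⱼ h(Vⱼ))] = m 𝔼[g h] + m (m - 1) 𝔼[g] 𝔼[h]`:
the `m` diagonal terms are joint moments and the `m (m - 1)` off-diagonal ones factor by
independence. Applied to the three pairings of `x, y, z, w`, the diagonal parts contribute
`3 𝔼[XYZW]`, which is exactly what the weight `m + 2` on the fourth-moment mean compensates, so
`(m - 1) 𝔼[c₄⁽ᵈ⁾] = (m - 1) (𝔼[XYZW] - 𝔼[XY]𝔼[ZW] - 𝔼[XZ]𝔼[YW] - 𝔼[XW]𝔼[YZ])`.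
-/

open MeasureTheory ProbabilityTheory

instance ENNReal.HolderTriple.instFourFourTwo : ENNReal.HolderTriple 4 4 2 :=
  ⟨by rw [show (4 : ENNReal) = 2 * 2 by norm_num, ENNReal.mul_inv (by simp) (by simp), ← two_mul,
    ← mul_assoc, ENNReal.mul_inv_cancel (by simp) (by simp), one_mul]⟩

section IID

variable {Ω E ι : Type*} [MeasurableSpace Ω] [MeasurableSpace E] {μ : Measure Ω}
  {V : ι → Ω → E} {i₀ : ι} {g h : E → ℝ}

lemma integral_sum_comp_of_identDistrib [Fintype ι] (hident : ∀ i, IdentDistrib (V i) (V i₀) μ μ)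
    (hg : Measurable g) (hg₁ : Integrable (fun ω => g (V i₀ ω)) μ) :
    ∫ ω, ∑ i, g (V i ω) ∂μ = Fintype.card ι * ∫ ω, g (V i₀ ω) ∂μ := by
  have hint : ∀ i, Integrable (fun ω => g (V i ω)) μ := fun i =>
    ((hident i).symm.comp hg).integrable_snd hg₁
  have heq : ∀ i, ∫ ω, g (V i ω) ∂μ = ∫ ω, g (V i₀ ω) ∂μ := fun i =>
    ((hident i).comp hg).integral_eq
  rw [integral_finsetSum _ fun i _ => hint i]
  simp [heq]

lemma integrable_comp_mul_comp_of_iid [IsFiniteMeasure μ] (hindep : iIndepFun V μ)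
    (hident : ∀ i, IdentDistrib (V i) (V i₀) μ μ) (hg : Measurable g) (hh : Measurable h)
    (hg₂ : MemLp (fun ω => g (V i₀ ω)) 2 μ) (hh₂ : MemLp (fun ω => h (V i₀ ω)) 2 μ) (i j : ι) :
    Integrable (fun ω => g (V i ω) * h (V j ω)) μ := by
  have hgi : MemLp (fun ω => g (V i ω)) 2 μ := ((hident i).symm.comp hg).memLp_snd hg₂
  have hhj : MemLp (fun ω => h (V j ω)) 2 μ := ((hident j).symm.comp hh).memLp_snd hh₂
  obtain rfl | hij := eq_or_ne i j
  · exact hgi.integrable_mul hhj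
  · exact ((hindep.indepFun hij).comp hg hh).integrable_mul
      (hgi.integrable one_le_two) (hhj.integrable one_le_two)

lemma integral_comp_mul_comp_of_iid [DecidableEq ι] (hindep : iIndepFun V μ)
    (hident : ∀ i, IdentDistrib (V i) (V i₀) μ μ) (hg : Measurable g) (hh : Measurable h)
    (i j : ι) :
    ∫ ω, g (V i ω) * h (V j ω) ∂μ = if i = j then ∫ ω, g (V i₀ ω) * h (V i₀ ω) ∂μ
      else (∫ ω, g (V i₀ ω) ∂μ) * ∫ ω, h (V i₀ ω) ∂μ := by
  obtain rfl | hij := eq_or_ne i j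
  · simpa using ((hident i).comp (hg.mul hh)).integral_eq
  · have hgi : ∫ ω, g (V i ω) ∂μ = ∫ ω, g (V i₀ ω) ∂μ := ((hident i).comp hg).integral_eq
    have hhj : ∫ ω, h (V j ω) ∂μ = ∫ ω, h (V i₀ ω) ∂μ := ((hident j).comp hh).integral_eq
    rw [if_neg hij, ← hgi, ← hhj]
    exact ((hindep.indepFun hij).comp hg hh).integral_mul_eq_mul_integral
      (hg.comp_aemeasurable (hident i).aemeasurable_fst).aestronglyMeasurable
      (hh.comp_aemeasurable (hident j).aemeasurable_fst).aestronglyMeasurable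

variable [Fintype ι] [IsFiniteMeasure μ]

lemma integrable_sum_mul_sum_of_iid (hindep : iIndepFun V μ)
    (hident : ∀ i, IdentDistrib (V i) (V i₀) μ μ) (hg : Measurable g) (hh : Measurable h)
    (hg₂ : MemLp (fun ω => g (V i₀ ω)) 2 μ) (hh₂ : MemLp (fun ω => h (V i₀ ω)) 2 μ) :
    Integrable (fun ω => (∑ i, g (V i ω)) * ∑ j, h (V j ω)) μ := by
  simp_rw [Finset.sum_mul_sum]
  exact integrable_finsetSum _ fun i _ => integrable_finsetSum _ fun j _ =>
    integrable_comp_mul_comp_of_iid hindep hident hg hh hg₂ hh₂ i j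

lemma integral_sum_mul_sum_of_iid (hindep : iIndepFun V μ)
    (hident : ∀ i, IdentDistrib (V i) (V i₀) μ μ) (hg : Measurable g) (hh : Measurable h)
    (hg₂ : MemLp (fun ω => g (V i₀ ω)) 2 μ) (hh₂ : MemLp (fun ω => h (V i₀ ω)) 2 μ) :
    ∫ ω, (∑ i, g (V i ω)) * (∑ j, h (V j ω)) ∂μ
      = Fintype.card ι * ∫ ω, g (V i₀ ω) * h (V i₀ ω) ∂μ
        + Fintype.card ι * (Fintype.card ι - 1)
          * ((∫ ω, g (V i₀ ω) ∂μ) * ∫ ω, h (V i₀ ω) ∂μ) := by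
  classical
  have hint := integrable_comp_mul_comp_of_iid hindep hident hg hh hg₂ hh₂
  have hrow : ∀ i, ∫ ω, ∑ j, g (V i ω) * h (V j ω) ∂μ = ∫ ω, g (V i₀ ω) * h (V i₀ ω) ∂μ
      + (Fintype.card ι - 1) * ((∫ ω, g (V i₀ ω) ∂μ) * ∫ ω, h (V i₀ ω) ∂μ) := fun i => by
    rw [integral_finsetSum _ fun j _ => hint i j,
      Finset.sum_congr rfl fun j _ => integral_comp_mul_comp_of_iid hindep hident hg hh i j]
    simp [Finset.sum_ite, Finset.filter_eq, Finset.filter_ne,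
      Nat.cast_pred (Fintype.card_pos_iff.2 ⟨i⟩)]
  simp_rw [Finset.sum_mul_sum]
  rw [integral_finsetSum _ fun i _ => integrable_finsetSum _ fun j _ => hint i j]
  simp only [hrow, Finset.sum_const, Finset.card_univ, nsmul_eq_mul]
  ring

end IID

lemma integral_reducedC4Estimator {Ω : Type*} [MeasurableSpace Ω] {μ : Measure Ω} {m : ℝ}
    (hm₀ : m ≠ 0) (hm₁ : m - 1 ≠ 0) {s a₁ a₂ b₁ b₂ c₁ c₂ : Ω → ℝ} (hs : Integrable s μ)
    (ha : Integrable (fun ω => a₁ ω * a₂ ω) μ) (hb : Integrable (fun ω => b₁ ω * b₂ ω) μ)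
    (hc : Integrable (fun ω => c₁ ω * c₂ ω) μ) :
    ∫ ω, ((m + 2) * (m⁻¹ * s ω) - m * ((m⁻¹ * a₁ ω) * (m⁻¹ * a₂ ω)
        + (m⁻¹ * b₁ ω) * (m⁻¹ * b₂ ω) + (m⁻¹ * c₁ ω) * (m⁻¹ * c₂ ω))) / (m - 1) ∂μ
      = ((m + 2) * ∫ ω, s ω ∂μ - ((∫ ω, a₁ ω * a₂ ω ∂μ) + (∫ ω, b₁ ω * b₂ ω ∂μ)
        + ∫ ω, c₁ ω * c₂ ω ∂μ)) / (m * (m - 1)) := by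
  have hpointwise : ∀ ω, ((m + 2) * (m⁻¹ * s ω) - m * ((m⁻¹ * a₁ ω) * (m⁻¹ * a₂ ω)
        + (m⁻¹ * b₁ ω) * (m⁻¹ * b₂ ω) + (m⁻¹ * c₁ ω) * (m⁻¹ * c₂ ω))) / (m - 1)
      = (m * (m - 1))⁻¹ * ((m + 2) * s ω - (a₁ ω * a₂ ω + b₁ ω * b₂ ω + c₁ ω * c₂ ω)) :=
    fun ω => by field_simp
  simp_rw [hpointwise]
  rw [integral_const_mul, integral_sub (hs.const_mul _) (by fun_prop), integral_const_mul,
    integral_add (by fun_prop) hc, integral_add ha hb, div_eq_inv_mul]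

lemma integral_reducedC4Estimator_of_iid {Ω E : Type*} [MeasurableSpace Ω] [MeasurableSpace E]
    {μ : Measure Ω} [IsFiniteMeasure μ] {m : ℕ} (hm : 2 ≤ m) {V : Fin m → Ω → E} {i₀ : Fin m}
    (hindep : iIndepFun V μ) (hident : ∀ i, IdentDistrib (V i) (V i₀) μ μ) {x y z w : E → ℝ}
    (hx : Measurable x) (hy : Measurable y) (hz : Measurable z) (hw : Measurable w)
    (hx₄ : MemLp (fun ω => x (V i₀ ω)) 4 μ) (hy₄ : MemLp (fun ω => y (V i₀ ω)) 4 μ)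
    (hz₄ : MemLp (fun ω => z (V i₀ ω)) 4 μ) (hw₄ : MemLp (fun ω => w (V i₀ ω)) 4 μ) :
    ∫ ω, (((m : ℝ) + 2) * ((m : ℝ)⁻¹ * ∑ i, x (V i ω) * y (V i ω) * z (V i ω) * w (V i ω))
      - (m : ℝ) * (((m : ℝ)⁻¹ * ∑ i, x (V i ω) * y (V i ω)) * ((m : ℝ)⁻¹ * ∑ i, z (V i ω) * w (V i ω))
        + ((m : ℝ)⁻¹ * ∑ i, x (V i ω) * z (V i ω)) * ((m : ℝ)⁻¹ * ∑ i, y (V i ω) * w (V i ω))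
        + ((m : ℝ)⁻¹ * ∑ i, x (V i ω) * w (V i ω)) * ((m : ℝ)⁻¹ * ∑ i, y (V i ω) * z (V i ω))))
        / ((m : ℝ) - 1) ∂μ
      = (∫ ω, x (V i₀ ω) * y (V i₀ ω) * z (V i₀ ω) * w (V i₀ ω) ∂μ)
        - (∫ ω, x (V i₀ ω) * y (V i₀ ω) ∂μ) * (∫ ω, z (V i₀ ω) * w (V i₀ ω) ∂μ)
        - (∫ ω, x (V i₀ ω) * z (V i₀ ω) ∂μ) * (∫ ω, y (V i₀ ω) * w (V i₀ ω) ∂μ)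
        - (∫ ω, x (V i₀ ω) * w (V i₀ ω) ∂μ) * (∫ ω, y (V i₀ ω) * z (V i₀ ω) ∂μ) := by
  have hxyzw : Integrable (fun ω => x (V i₀ ω) * y (V i₀ ω) * z (V i₀ ω) * w (V i₀ ω)) μ := by
    have hxy : MemLp (fun ω => x (V i₀ ω) * y (V i₀ ω)) 2 μ := hy₄.mul' hx₄
    have hzw : MemLp (fun ω => z (V i₀ ω) * w (V i₀ ω)) 2 μ := hw₄.mul' hz₄
    simpa only [Pi.mul_def, mul_assoc] using hxy.integrable_mul hzw
  have iS : Integrable (fun ω => ∑ i, x (V i ω) * y (V i ω) * z (V i ω) * w (V i ω)) μ :=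
    integrable_finsetSum _ fun i _ =>
      ((hident i).symm.comp (((hx.mul hy).mul hz).mul hw)).integrable_snd hxyzw
  have iA := integrable_sum_mul_sum_of_iid hindep hident (hx.mul hy) (hz.mul hw)
    (hy₄.mul' hx₄) (hw₄.mul' hz₄)
  have iB := integrable_sum_mul_sum_of_iid hindep hident (hx.mul hz) (hy.mul hw)
    (hz₄.mul' hx₄) (hw₄.mul' hy₄)
  have iC := integrable_sum_mul_sum_of_iid hindep hident (hx.mul hw) (hy.mul hz)
    (hw₄.mul' hx₄) (hz₄.mul' hy₄)
  have hS := integral_sum_comp_of_identDistrib hident (((hx.mul hy).mul hz).mul hw) hxyzw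
  have hA := integral_sum_mul_sum_of_iid hindep hident (hx.mul hy) (hz.mul hw)
    (hy₄.mul' hx₄) (hw₄.mul' hz₄)
  have hB := integral_sum_mul_sum_of_iid hindep hident (hx.mul hz) (hy.mul hw)
    (hz₄.mul' hx₄) (hw₄.mul' hy₄)
  have hC := integral_sum_mul_sum_of_iid hindep hident (hx.mul hw) (hy.mul hz)
    (hw₄.mul' hx₄) (hz₄.mul' hy₄)
  simp only [Fintype.card_fin, Pi.mul_apply] at iA iB iC hS hA hB hC
  have hm₁ : (m : ℝ) - 1 ≠ 0 := sub_ne_zero.2 (by norm_cast; omega)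
  set κ := ∫ ω, x (V i₀ ω) * y (V i₀ ω) * z (V i₀ ω) * w (V i₀ ω) ∂μ
  have hdiag : ∫ ω, x (V i₀ ω) * y (V i₀ ω) * (z (V i₀ ω) * w (V i₀ ω)) ∂μ = κ
      ∧ ∫ ω, x (V i₀ ω) * z (V i₀ ω) * (y (V i₀ ω) * w (V i₀ ω)) ∂μ = κ
      ∧ ∫ ω, x (V i₀ ω) * w (V i₀ ω) * (y (V i₀ ω) * z (V i₀ ω)) ∂μ = κ := by
    refine ⟨?_, ?_, ?_⟩ <;> exact integral_congr_ae (.of_forall fun _ => by ring)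
  rw [integral_reducedC4Estimator (by positivity) hm₁ iS iA iB iC, hS, hA, hB, hC, hdiag.1,
    hdiag.2.1, hdiag.2.2]
  field_simp
  ring

theorem unbiased_c4_d {Ω : Type*} [MeasurableSpace Ω] (μ : Measure Ω) [IsProbabilityMeasure μ]
    (m : ℕ) (hm : 2 ≤ m)
    (X Y Z W : Fin m → Ω → ℝ)
    (hindep : iIndepFun (fun i ω => (X i ω, Y i ω, Z i ω, W i ω)) μ)
    (hident : ∀ i, IdentDistrib (fun ω => (X i ω, Y i ω, Z i ω, W i ω)) (fun ω => (X ⟨0, by omega⟩ ω, Y ⟨0, by omega⟩ ω, Z ⟨0, by omega⟩ ω, W ⟨0, by omega⟩ ω)) μ μ)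
    (hX4 : MemLp (X ⟨0, by omega⟩) 4 μ)
    (hY4 : MemLp (Y ⟨0, by omega⟩) 4 μ)
    (hZ4 : MemLp (Z ⟨0, by omega⟩) 4 μ)
    (hW4 : MemLp (W ⟨0, by omega⟩) 4 μ)
    (hEX : (∫ ω, X ⟨0, by omega⟩ ω ∂μ) = 0)
    (hEY : (∫ ω, Y ⟨0, by omega⟩ ω ∂μ) = 0)
    (hEZ : (∫ ω, Z ⟨0, by omega⟩ ω ∂μ) = 0)
    (hEW : (∫ ω, W ⟨0, by omega⟩ ω ∂μ) = 0) :
    (∫ ω, (((m:ℝ)+2) * ((m:ℝ)⁻¹ * ∑ i, X i ω * Y i ω * Z i ω * W i ω) - (m:ℝ) * (((m:ℝ)⁻¹ * ∑ i, X i ω * Y i ω) * ((m:ℝ)⁻¹ * ∑ i, Z i ω * W i ω) + ((m:ℝ)⁻¹ * ∑ i, X i ω * Z i ω) * ((m:ℝ)⁻¹ * ∑ i, Y i ω * W i ω) + ((m:ℝ)⁻¹ * ∑ i, X i ω * W i ω) * ((m:ℝ)⁻¹ * ∑ i, Y i ω * Z i ω))) / ((m:ℝ)-1) ∂μ) = (∫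 ω, X ⟨0, by omega⟩ ω * Y ⟨0, by omega⟩ ω * Z ⟨0, by omega⟩ ω * W ⟨0, by omega⟩ ω ∂μ) - (∫ ω, X ⟨0, by omega⟩ ω * Y ⟨0, by omega⟩ ω ∂μ) * (∫ ω, Z ⟨0, by omega⟩ ω * W ⟨0, by omega⟩ ω ∂μ) - (∫ ω, X ⟨0, by omega⟩ ω * Z ⟨0, by omega⟩ ω ∂μ) * (∫ ω, Y ⟨0, by omega⟩ ω * W ⟨0, by omega⟩ ω ∂μ) - (∫ ω, X ⟨0, by omega⟩ ω * W ⟨0, by omega⟩ ω ∂μ) * (∫ ω, Y ⟨0, by omega⟩ ω * Z ⟨0, by omega⟩ ω ∂μ) ∧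
    (∫ ω, X ⟨0, by omega⟩ ω * Y ⟨0, by omega⟩ ω * Z ⟨0, by omega⟩ ω * W ⟨0, by omega⟩ ω ∂μ) - (∫ ω, X ⟨0, by omega⟩ ω * Y ⟨0, by omega⟩ ω ∂μ) * (∫ ω, Z ⟨0, by omega⟩ ω * W ⟨0, by omega⟩ ω ∂μ) - (∫ ω, X ⟨0, by omega⟩ ω * Z ⟨0, by omega⟩ ω ∂μ) * (∫ ω, Y ⟨0, by omega⟩ ω * W ⟨0, by omega⟩ ω ∂μ) - (∫ ω, X ⟨0, by omega⟩ ω * W ⟨0, by omega⟩ ω ∂μ) * (∫ ω, Y ⟨0, by omega⟩ ω * Z ⟨0, by omega⟩ ω ∂μ) = (∫ ω, X ⟨0, by omega⟩ ω * Y ⟨0, by omega⟩ ω * Z ⟨0, by omega⟩ ω * W ⟨0, by omega⟩ ω ∂μ) - (∫ ω, X ⟨0, by omega⟩ ω * Y ⟨0, by omega⟩ ω * Z ⟨0, by omega⟩ ω ∂μ) * (∫ ω, W ⟨0, by omega⟩ ω ∂μ) - (∫ ω, X ⟨0, by omega⟩ ω * Y ⟨0, by omega⟩ ω * W ⟨0,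 by omega⟩ ω ∂μ) * (∫ ω, Z ⟨0, by omega⟩ ω ∂μ) - (∫ ω, X ⟨0, by omega⟩ ω * Z ⟨0, by omega⟩ ω * W ⟨0, by omega⟩ ω ∂μ) * (∫ ω, Y ⟨0, by omega⟩ ω ∂μ) - (∫ ω, Y ⟨0, by omega⟩ ω * Z ⟨0, by omega⟩ ω * W ⟨0, by omega⟩ ω ∂μ) * (∫ ω, X ⟨0, by omega⟩ ω ∂μ) - (∫ ω, X ⟨0, by omega⟩ ω * Y ⟨0, by omega⟩ ω ∂μ) * (∫ ω, Z ⟨0, by omega⟩ ω * W ⟨0, by omega⟩ ω ∂μ) - (∫ ω, X ⟨0, by omega⟩ ω * Z ⟨0, by omega⟩ ω ∂μ) * (∫ ω, Y ⟨0, by omega⟩ ω * W ⟨0, by omega⟩ ω ∂μ) - (∫ ω, X ⟨0, by omega⟩ ω * W ⟨0, by omega⟩ ω ∂μ) * (∫ ω, Y ⟨0, by omega⟩ ω * Z ⟨0, by omega⟩ ω ∂μ) + 2 * (∫ ω, X ⟨0, by omega⟩ ω * Y ⟨0, by omega⟩ ω ∂μ) * (∫ ω, Z ⟨0, by omega⟩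 ω ∂μ) * (∫ ω, W ⟨0, by omega⟩ ω ∂μ) + 2 * (∫ ω, X ⟨0, by omega⟩ ω * Z ⟨0, by omega⟩ ω ∂μ) * (∫ ω, Y ⟨0, by omega⟩ ω ∂μ) * (∫ ω, W ⟨0, by omega⟩ ω ∂μ) + 2 * (∫ ω, X ⟨0, by omega⟩ ω * W ⟨0, by omega⟩ ω ∂μ) * (∫ ω, Y ⟨0, by omega⟩ ω ∂μ) * (∫ ω, Z ⟨0, by omega⟩ ω ∂μ) + 2 * (∫ ω, Y ⟨0, by omega⟩ ω * Z ⟨0, by omega⟩ ω ∂μ) * (∫ ω, X ⟨0, by omega⟩ ω ∂μ) * (∫ ω, W ⟨0, by omega⟩ ω ∂μ) + 2 * (∫ ω, Y ⟨0, by omega⟩ ω * W ⟨0, by omega⟩ ω ∂μ) * (∫ ω, X ⟨0, by omega⟩ ω ∂μ) * (∫ ω, Z ⟨0, by omega⟩ ω ∂μ) + 2 * (∫ ω, Z ⟨0, by omega⟩ ω * W ⟨0, by omega⟩ ω ∂μ) * (∫ ω, X ⟨0, by omega⟩ ω ∂μ) * (∫ ω, Y ⟨0, by omega⟩ ω ∂μ)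 - 6 * (∫ ω, X ⟨0, by omega⟩ ω ∂μ) * (∫ ω, Y ⟨0, by omega⟩ ω ∂μ) * (∫ ω, Z ⟨0, by omega⟩ ω ∂μ) * (∫ ω, W ⟨0, by omega⟩ ω ∂μ) :=
  ⟨integral_reducedC4Estimator_of_iid hm hindep hident (x := fun p => p.1) (y := fun p => p.2.1)
    (z := fun p => p.2.2.1) (w := fun p => p.2.2.2) (by fun_prop) (by fun_prop) (by fun_prop)
    (by fun_prop) hX4 hY4 hZ4 hW4,
    by rw [hEX, hEY, hEZ, hEW]; ring⟩
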